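/- arXiv:1902.07758 — 2 statements merged into one kernel-verified Lean document; each statement's English description precedes it below -/
import Mathlib

section
/- Let G be a finite group, K a subgroup of G, and g ∈ G. Consider the action of G on the left coset space G/K by left multiplication. Then the number of cosets fixed by g, multiplied by |K|, equals |C_G(g)| multiplied by the number of elements k ∈ K that are conjugate to g in G; that is, |Fix_{G/K}(g)| · |K| = |C_G(g)| · |{k ∈ K : k is G-conjugate to g}|. -/
/-!
A coset `xK` is fixed by `g` exactly when `x⁻¹ g x ∈ K`, and each coset has `|K|` elements, so the
left-hand side counts the `x ∈ G` conjugating `g` into `K`. By orbit–stabilizer for the conjugation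
action, every element of `K` conjugate to `g` is reached by exactly `|C_G(g)|` such `x`.
-/

open MulAction

theorem MulAction.card_setOf_smul_mem {G α : Type*} [Group G] [MulAction G α] (a : α)
    (s : Set α) :
    Nat.card {h : G | h • a ∈ s} = Nat.card (stabilizer G a) * Nat.card ↥(s ∩ orbit G a) := by
  let t : Set (G ⧸ stabilizer G a) := ofQuotientStabilizer G a ⁻¹' s
  have ht : ofQuotientStabilizer G a '' t = s ∩ orbit G a := by
    rw [Set.image_preimage_eq_inter_range]
    congr 1
    ext b
    constructor
    · rintro ⟨q, rfl⟩; exact ofQuotientStabilizer_mem_orbit G a q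
    · rintro ⟨h, rfl⟩; exact ⟨h, rfl⟩
  calc Nat.card {h : G | h • a ∈ s} = Nat.card (QuotientGroup.mk ⁻¹' t) := rfl
    _ = Nat.card (stabilizer G a) * Nat.card t :=
      (Nat.card_congr (QuotientGroup.preimageMkEquivSubgroupProdSet _ t)).trans
        (Nat.card_prod _ _)
    _ = _ := by rw [← ht, Nat.card_image_of_injective (injective_ofQuotientStabilizer G a)]

theorem QuotientGroup.smul_mk_eq_mk_iff {G : Type*} [Group G] (K : Subgroup G) (g x : G) :
    g • (x : G ⧸ K) = x ↔ x⁻¹ * g * x ∈ K := by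
  rw [MulAction.Quotient.smul_mk, smul_eq_mul, QuotientGroup.eq, ← K.inv_mem_iff]
  group

theorem QuotientGroup.card_fixed_mul_card_eq_card_setOf_conj_mem {G : Type*} [Group G]
    (K : Subgroup G) (g : G) :
    Nat.card {x : G ⧸ K | g • x = x} * Nat.card K = Nat.card {x : G | x⁻¹ * g * x ∈ K} := by
  rw [mul_comm, ← Nat.card_prod,
    ← Nat.card_congr (QuotientGroup.preimageMkEquivSubgroupProdSet K _)]
  simp only [Set.preimage_ofPred_eq, QuotientGroup.smul_mk_eq_mk_iff]

theorem Subgroup.card_setOf_conj_mem {G : Type*} [Group G] (K : Subgroup G) (g : G) :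
    Nat.card {x : G | x⁻¹ * g * x ∈ K} =
      Nat.card (Subgroup.centralizer {g}) * Nat.card {k : K | IsConj g (k : G)} := by
  have hconj :
      Nat.card {x : G | x⁻¹ * g * x ∈ K} = Nat.card {h : ConjAct G | h • g ∈ (K : Set G)} :=
    Nat.card_congr <| ((Equiv.inv G).trans ConjAct.toConjAct.toEquiv).subtypeEquiv fun x => by
      simp [ConjAct.smul_def]
  have hcent : Nat.card (stabilizer (ConjAct G) g) = Nat.card (Subgroup.centralizer {g}) :=
    Nat.card_congr <| (ConjAct.toConjAct.toEquiv.subtypeEquiv fun x => by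
      rw [Subgroup.centralizer_eq_comap_stabilizer]; rfl).symm
  have hclass : Nat.card ↥((K : Set G) ∩ orbit (ConjAct G) g) =
      Nat.card {k : K | IsConj g (k : G)} := by
    have himage :
        Subtype.val '' {k : K | IsConj g (k : G)} = (K : Set G) ∩ orbit (ConjAct G) g := by
      ext x
      simp only [Set.mem_image, Set.mem_ofPred_eq, Subtype.exists, exists_prop,
        exists_eq_right_right, Set.mem_inter_iff, SetLike.mem_coe, ConjAct.mem_orbit_conjAct,
        isConj_comm (g := x)]
    rw [← himage, Nat.card_image_of_injective Subtype.val_injective]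
  rw [hconj, card_setOf_smul_mem, hcent, hclass]

theorem card_fixed_cosets_mul_card_eq_general
    {G : Type*} [Group G] (K : Subgroup G) (g : G) :
    Nat.card {x : G ⧸ K | g • x = x} * Nat.card K =
      Nat.card (Subgroup.centralizer {g}) * Nat.card {k : K | IsConj g (k : G)} := by
  rw [QuotientGroup.card_fixed_mul_card_eq_card_setOf_conj_mem, K.card_setOf_conj_mem]

/-- Let `G` be a finite group, `K ≤ G` and `g ∈ G`. For the action of `G` on the left
coset space `G/K` by left multiplication, the number of cosets fixed by `g`, times `|K|`,
equals `|C_G(g)|` times the number of elements of `K` that are `G`-conjugate to `g`. -/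
theorem card_fixed_cosets_mul_card_eq
    {G : Type*} [Group G] [Finite G] (K : Subgroup G) (g : G) :
    Nat.card {x : G ⧸ K | g • x = x} * Nat.card K =
      Nat.card (Subgroup.centralizer {g}) * Nat.card {k : K | IsConj g (k : G)} :=
  card_fixed_cosets_mul_card_eq_general K g
end

section
/- Let G be a finite group, K a subgroup of G, and g ∈ G. Suppose that the set of elements of K which are conjugate to g in G forms a single K-conjugacy class, with representative k ∈ K. Then the number of left cosets in G/K fixed by g (under left multiplication) equals |C_G(g)| / |C_K(k)|. -/
/-!
Replacing `g` by its conjugate `k` changes neither side, so we may assume `g = k ∈ K`.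
Then `C_G(k)` permutes the cosets fixed by `k`, and the class hypothesis makes this action
transitive: if `k` fixes `aK` then `a⁻¹ k a ∈ K` is `K`-conjugate to `k`, say by `u`, and `a u`
centralizes `k` and sends `K` to `aK`. The stabilizer of the coset `K` is `C_G(k) ∩ K = C_K(k)`,
so orbit–stabilizer gives the formula.
-/

open MulAction Subgroup

section

variable {G : Type*} [Group G]

theorem MulAction.card_fixedBy_eq_of_isConj {α : Type*} [MulAction G α] {g h : G}
    (hgh : IsConj g h) : Nat.card (fixedBy α g) = Nat.card (fixedBy α h) := by
  obtain ⟨c, rfl⟩ := isConj_iff.mp hgh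
  rw [← smul_fixedBy, Nat.card_coe_set_eq, Nat.card_coe_set_eq, Set.ncard_smul_set]

theorem Subgroup.card_centralizer_eq_of_isConj {g h : G} (hgh : IsConj g h) :
    Nat.card (centralizer {g}) = Nat.card (centralizer {h}) := by
  obtain ⟨c, rfl⟩ := isConj_iff.mp hgh
  rw [nat_card_centralizer_nat_card_stabilizer, nat_card_centralizer_nat_card_stabilizer,
    ← ConjAct.toConjAct_smul, stabilizer_smul_eq_stabilizer_map_conj,
    card_map_of_injective (MulEquiv.injective _)]

theorem Subgroup.card_subgroupOf_comm (H K : Subgroup G) :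
    Nat.card (H.subgroupOf K) = Nat.card (K.subgroupOf H) :=
  Nat.card_congr
    { toFun := fun x => ⟨⟨x.1.1, x.2⟩, x.1.2⟩
      invFun := fun x => ⟨⟨x.1.1, x.2⟩, x.1.2⟩
      left_inv := fun _ => rfl
      right_inv := fun _ => rfl }

theorem Subgroup.centralizer_singleton_subgroupOf (K : Subgroup G) (k : K) :
    (centralizer {(k : G)}).subgroupOf K = centralizer {k} := by
  ext x
  simp only [mem_subgroupOf, mem_centralizer_singleton_iff, Subtype.ext_iff, coe_mul]

theorem QuotientGroup.smul_mk_eq_self_iff (K : Subgroup G) (g a : G) :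
    g • (a : G ⧸ K) = a ↔ a⁻¹ * g * a ∈ K := by
  rw [eq_comm, MulAction.Quotient.smul_mk, QuotientGroup.eq, smul_eq_mul, mul_assoc]

section Coset

variable (K : Subgroup G) (k : K)

theorem fixedBy_quotient_eq_orbit_centralizer
    (hclass : ∀ k' : K, IsConj (k : G) k' → IsConj k k') :
    fixedBy (G ⧸ K) (k : G) = orbit (centralizer {(k : G)}) ((1 : G) : G ⧸ K) := by
  ext x
  constructor
  · intro hx
    obtain ⟨a, rfl⟩ := QuotientGroup.mk_surjective x
    rw [mem_fixedBy, QuotientGroup.smul_mk_eq_self_iff] at hx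
    obtain ⟨u, hu⟩ := isConj_iff.mp (hclass ⟨_, hx⟩ (isConj_iff.mpr ⟨a⁻¹, by group⟩))
    have hu' : (u : G) * k * (u : G)⁻¹ = a⁻¹ * k * a := congrArg Subtype.val hu
    refine ⟨⟨a * u, mem_centralizer_singleton_iff.mpr ?_⟩, ?_⟩
    · calc a * u * k = a * ((u : G) * k * (u : G)⁻¹) * u := by group
        _ = k * (a * u) := by rw [hu']; group
    · show ((a * u : G) • ((1 : G) : G ⧸ K)) = a
      rw [MulAction.Quotient.smul_mk, smul_eq_mul, mul_one, QuotientGroup.eq]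
      simp
  · rintro ⟨z, rfl⟩
    have hk1 : (k : G) • ((1 : G) : G ⧸ K) = (1 : G) :=
      (QuotientGroup.smul_mk_eq_self_iff K k 1).mpr (by simp)
    have hzk : (z : G) * k = k * z := mem_centralizer_singleton_iff.mp z.2
    show (k : G) • (z : G) • ((1 : G) : G ⧸ K) = (z : G) • ((1 : G) : G ⧸ K)
    rw [smul_smul, ← hzk, mul_smul, hk1]

theorem card_stabilizer_centralizer_mk_one :
    Nat.card (stabilizer (centralizer {(k : G)}) ((1 : G) : G ⧸ K)) =
      Nat.card (centralizer {k}) := by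
  change Nat.card ((stabilizer G ((1 : G) : G ⧸ K)).subgroupOf _) = _
  rw [stabilizer_quotient, card_subgroupOf_comm, centralizer_singleton_subgroupOf]

theorem card_fixedBy_quotient_mul_card_centralizer
    (hclass : ∀ k' : K, IsConj (k : G) k' → IsConj k k') :
    Nat.card (fixedBy (G ⧸ K) (k : G)) * Nat.card (centralizer {k}) =
      Nat.card (centralizer {(k : G)}) := by
  rw [fixedBy_quotient_eq_orbit_centralizer K k hclass,
    Nat.card_congr (orbitEquivQuotientStabilizer _ _), ← card_stabilizer_centralizer_mk_one,
    mul_comm]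
  exact card_mul_index _

end Coset

end

/-- Let `G` be a finite group, `K ≤ G` and `g ∈ G`. Suppose the elements of `K` that are
`G`-conjugate to `g` form a single `K`-conjugacy class, with representative `k ∈ K`.
Then the number of left cosets of `K` fixed by `g` equals `|C_G(g)| / |C_K(k)|`. -/
theorem card_fixed_cosets_eq_centralizer_quotient
    {G : Type*} [Group G] [Finite G] (K : Subgroup G) (g : G) (k : K)
    (hk : IsConj g (k : G))
    (hclass : ∀ k' : K, IsConj g (k' : G) → IsConj k k') :
    Nat.card {x : G ⧸ K | g • x = x} =
      Nat.card (Subgroup.centralizer {g}) /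
        Nat.card (Subgroup.centralizer ({k} : Set K)) := by
  have hclass' : ∀ k' : K, IsConj (k : G) k' → IsConj k k' :=
    fun k' hk' => hclass k' (hk.trans hk')
  refine (Nat.div_eq_of_eq_mul_left Nat.card_pos ?_).symm
  rw [card_centralizer_eq_of_isConj hk, ← card_fixedBy_quotient_mul_card_centralizer K k hclass']
  exact congrArg (· * _) (card_fixedBy_eq_of_isConj hk.symm)
end
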